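/- In the cyclic module A/(u−1)A with u = e^{−iα}a_{pq}, gcd(p,q)=1, the vectors ξ·a_{jk} (ξ the class of 1) are eigenvectors of right multiplication by u with eigenvalue e^{iλ(jq − kp)}, and ξ·a_{j+p,k+q} = e^{i(α − λkp)} ξ·a_{jk}. Consequently, after rescaling, the module has a basis indexed by ℤ²/(p,q)ℤ, which via [j,k] ↦ jq − kp is in bijection with ℤ. -/

import Mathlib

/-!
With `θ(j, k) = e^{i(λkp - α)}` one has `u a_{jk} = θ(j, k) a_{j+p,k+q}` and
`a_{jk} u = e^{iλ(jq - kp)} u a_{jk}`, so the first two claims follow from `[u r] = [r]` in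
`A/(u-1)A`. For the basis, a Bézout relation `qx - py = 1` gives coordinates
`(m, t) = (jq - kp, kx - jy)` on `ℤ²` in which translation by `(p, q)` is `t ↦ t + 1`. Rescaling
`a_{jk}` by unimodular constants that solve the cocycle equation for `θ` along each line
`m = const` turns left multiplication by `u` into the plain shift `t ↦ t + 1`, and the cokernel of
`shift - 1` on a free module with basis indexed by `κ × ℤ` is free on `κ`.
-/

open MulOpposite

section Coinvariants

variable {R M κ : Type*} [Ring R] [AddCommGroup M] [Module R M]
  (b : Module.Basis (κ × ℤ) R M) {T : M →ₗ[R] M}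

theorem Module.Basis.sub_mem_range_sub_id_of_shift (hT : ∀ m t, T (b (m, t)) = b (m, t + 1))
    (m : κ) (t : ℤ) : b (m, t) - b (m, 0) ∈ LinearMap.range (T - LinearMap.id) := by
  induction t using Int.induction_on with
  | zero => simp
  | succ t ih =>
    have hstep : b (m, t + 1) - b (m, t) ∈ LinearMap.range (T - LinearMap.id) :=
      ⟨b (m, t), by simp [hT]⟩
    simpa using add_mem hstep ih
  | pred t ih =>
    have hstep : b (m, -t) - b (m, -t - 1) ∈ LinearMap.range (T - LinearMap.id) :=
      ⟨b (m, -t - 1), by simp [hT]⟩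
    simpa using sub_mem ih hstep

theorem Module.Basis.ker_lmapDomain_fst_comp_repr (hT : ∀ m t, T (b (m, t)) = b (m, t + 1)) :
    LinearMap.ker (Finsupp.lmapDomain R R Prod.fst ∘ₗ b.repr.toLinearMap) =
      LinearMap.range (T - LinearMap.id) := by
  set F := Finsupp.lmapDomain R R Prod.fst ∘ₗ b.repr.toLinearMap
  set G := Finsupp.linearCombination R fun m => b (m, 0)
  have hF : ∀ g, F (b g) = Finsupp.single g.1 1 := fun g => by simp [F]
  refine le_antisymm (fun v hv => ?_) ?_
  · have hGF : LinearMap.range (LinearMap.id - G ∘ₗ F) ≤ LinearMap.range (T - LinearMap.id) := by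
      rw [LinearMap.range_eq_map, ← b.span_eq, Submodule.map_span_le]
      rintro _ ⟨⟨m, t⟩, rfl⟩
      simpa [hF, G] using b.sub_mem_range_sub_id_of_shift hT m t
    simpa [LinearMap.mem_ker.mp hv] using hGF ⟨v, rfl⟩
  · rintro _ ⟨w, rfl⟩
    have hFT : F ∘ₗ (T - LinearMap.id) = 0 := b.ext fun g => by simp [hT, hF]
    exact LinearMap.congr_fun hFT w

theorem Module.Basis.lmapDomain_fst_comp_repr_surjective :
    Function.Surjective (Finsupp.lmapDomain R R Prod.fst ∘ₗ b.repr.toLinearMap) :=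
  (Finsupp.mapDomain_surjective Prod.fst_surjective).comp b.repr.surjective

noncomputable def Module.Basis.coinvariantsOfShift (hT : ∀ m t, T (b (m, t)) = b (m, t + 1)) :
    Module.Basis κ R (M ⧸ LinearMap.range (T - LinearMap.id)) :=
  .ofRepr <| (Submodule.quotEquivOfEq _ _ (b.ker_lmapDomain_fst_comp_repr hT).symm).trans <|
    LinearMap.quotKerEquivOfSurjective _ b.lmapDomain_fst_comp_repr_surjective

theorem Module.Basis.coinvariantsOfShift_apply (hT : ∀ m t, T (b (m, t)) = b (m, t + 1))
    (m : κ) (t : ℤ) : b.coinvariantsOfShift hT m = Submodule.Quotient.mk (b (m, t)) := by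
  rw [Module.Basis.coinvariantsOfShift, Module.Basis.coe_ofRepr, LinearEquiv.symm_apply_eq]
  simp

end Coinvariants

section RightIdeal

variable {R A κ : Type*} [CommRing R] [Ring A] [Algebra R A]

theorem Submodule.restrictScalars_span_singleton_op (y : A) :
    (Submodule.span Aᵐᵒᵖ {y}).restrictScalars R = LinearMap.range (LinearMap.mulLeft R y) := by
  ext x
  simp only [Submodule.restrictScalars_mem, Submodule.mem_span_singleton, LinearMap.mem_range,
    LinearMap.mulLeft_apply, op_surjective.exists, op_smul_eq_mul]

theorem Submodule.restrictScalars_span_sub_one (y : A) :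
    (Submodule.span Aᵐᵒᵖ {y - 1}).restrictScalars R =
      LinearMap.range (LinearMap.mulLeft R y - LinearMap.id) := by
  rw [Submodule.restrictScalars_span_singleton_op]
  congr 1
  ext r
  simp [sub_mul]

theorem Submodule.Quotient.mk_mul_eq_of_span_sub_one (y r : A) :
    (Submodule.Quotient.mk (y * r) : A ⧸ Submodule.span Aᵐᵒᵖ {y - 1}) = Submodule.Quotient.mk r := by
  have h : y * r - r = op r • (y - 1) := by rw [op_smul_eq_mul, sub_mul, one_mul]
  rw [Submodule.Quotient.eq, h]
  exact Submodule.smul_mem _ _ (Submodule.mem_span_singleton_self _)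

noncomputable def Module.Basis.quotientSpanSubOne (b : Module.Basis (κ × ℤ) R A) (y : A)
    (hy : ∀ m t, y * b (m, t) = b (m, t + 1)) :
    Module.Basis κ R (A ⧸ Submodule.span Aᵐᵒᵖ {y - 1}) :=
  (b.coinvariantsOfShift (T := LinearMap.mulLeft R y) hy).map <|
    (Submodule.quotEquivOfEq _ _ (Submodule.restrictScalars_span_sub_one y).symm).trans <|
      Submodule.Quotient.restrictScalarsEquiv R _

theorem Module.Basis.quotientSpanSubOne_apply (b : Module.Basis (κ × ℤ) R A) (y : A)
    (hy : ∀ m t, y * b (m, t) = b (m, t + 1)) (m : κ) (t : ℤ) :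
    b.quotientSpanSubOne y hy m = Submodule.Quotient.mk (b (m, t)) := by
  rw [Module.Basis.quotientSpanSubOne, Module.Basis.map_apply,
    Module.Basis.coinvariantsOfShift_apply b (T := LinearMap.mulLeft R y) (fun m t => hy m t) m t, LinearEquiv.trans_apply,
    Submodule.quotEquivOfEq_mk, Submodule.Quotient.restrictScalarsEquiv_mk]

end RightIdeal

def bezoutEquiv {p q x y : ℤ} (h : q * x - p * y = 1) : ℤ × ℤ ≃ ℤ × ℤ where
  toFun g := (g.1 * q - g.2 * p, g.2 * x - g.1 * y)
  invFun g := (g.1 * x + g.2 * p, g.1 * y + g.2 * q)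
  left_inv g := Prod.ext (by linear_combination g.1 * h) (by linear_combination g.2 * h)
  right_inv g := Prod.ext (by linear_combination g.1 * h) (by linear_combination g.2 * h)

namespace RotationAlgebra

def IsRotationFamily {A : Type*} [Ring A] [Algebra ℂ A] (lam : ℝ) (a : ℤ → ℤ → A) : Prop :=
  ∀ n₁ l₁ n₂ l₂ : ℤ,
    a n₁ l₁ * a n₂ l₂ = Complex.exp (Complex.I * (lam * n₁ * l₂)) • a (n₁ + n₂) (l₁ + l₂)

variable {A : Type*} [Ring A] [Algebra ℂ A] {lam α : ℝ} {a : ℤ → ℤ → A} {p q : ℤ} {u : A}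

theorem shift_mul (hmul : IsRotationFamily lam a)
    (hu : u = Complex.exp (-(Complex.I * α)) • a p q) (j k : ℤ) :
    u * a j k = Complex.exp (Complex.I * (lam * k * p - α)) • a (j + p) (k + q) := by
  rw [hu, smul_mul_assoc, hmul, smul_smul, ← Complex.exp_add, add_comm p, add_comm q]
  congr 2
  ring

theorem mul_shift (hmul : IsRotationFamily lam a)
    (hu : u = Complex.exp (-(Complex.I * α)) • a p q) (j k : ℤ) :
    a j k * u = Complex.exp (Complex.I * (lam * (j * q - k * p))) • (u * a j k) := by
  rw [shift_mul hmul hu, smul_smul, ← Complex.exp_add, hu, mul_smul_comm, hmul, smul_smul,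
    ← Complex.exp_add]
  congr 2
  ring

/-- Solution of `phase (m, t + 1) = phase (m, t) + α - λ p (m y + t q)`, the phase picked up by
`u` along the line `m = const` in the coordinates of `bezoutEquiv`. -/
noncomputable def phase (lam α : ℝ) (p q y : ℤ) (g : ℤ × ℤ) : ℝ :=
  g.2 * α - lam * p * (g.2 * g.1 * y + q * (g.2 * (g.2 - 1) / 2))

noncomputable def twistedBasis (b : Module.Basis (ℤ × ℤ) ℂ A) (lam α : ℝ) {p q x y : ℤ}
    (h : q * x - p * y = 1) : Module.Basis (ℤ × ℤ) ℂ A :=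
  (b.reindex (bezoutEquiv h)).unitsSMul fun g =>
    Units.mk0 (Complex.exp (-(Complex.I * phase lam α p q y g))) (Complex.exp_ne_zero _)

theorem twistedBasis_apply (b : Module.Basis (ℤ × ℤ) ℂ A) {x y : ℤ} (h : q * x - p * y = 1)
    (g : ℤ × ℤ) : twistedBasis b lam α h g =
      Complex.exp (-(Complex.I * phase lam α p q y g)) • b (g.1 * x + g.2 * p, g.1 * y + g.2 * q) := by
  rw [twistedBasis, Module.Basis.unitsSMul_apply, Module.Basis.reindex_apply]
  rfl

theorem twistedBasis_bezoutEquiv (b : Module.Basis (ℤ × ℤ) ℂ A) {x y : ℤ}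
    (h : q * x - p * y = 1) (g : ℤ × ℤ) : twistedBasis b lam α h (bezoutEquiv h g) =
      Complex.exp (-(Complex.I * phase lam α p q y (bezoutEquiv h g))) • b g := by
  rw [twistedBasis, Module.Basis.unitsSMul_apply, Module.Basis.reindex_apply,
    Equiv.symm_apply_apply, Units.smul_def, Units.val_mk0]

theorem mul_twistedBasis (hmul : IsRotationFamily lam a)
    (hu : u = Complex.exp (-(Complex.I * α)) • a p q)
    (b : Module.Basis (ℤ × ℤ) ℂ A) (hb : ∀ n l : ℤ, b (n, l) = a n l)
    {x y : ℤ} (h : q * x - p * y = 1) (m t : ℤ) :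
    u * twistedBasis b lam α h (m, t) = twistedBasis b lam α h (m, t + 1) := by
  rw [twistedBasis_apply, twistedBasis_apply, mul_smul_comm, hb, hb, shift_mul hmul hu, smul_smul,
    ← Complex.exp_add]
  congr 1
  · congr 1
    simp only [phase]
    push_cast
    ring
  · congr 1 <;> ring

end RotationAlgebra

theorem rotationAlgebra_cyclic_module_basis
    (lam : ℝ)
    (A : Type) [Ring A] [Algebra ℂ A]
    (a : ℤ → ℤ → A)
    (b : Module.Basis (ℤ × ℤ) ℂ A) (hb : ∀ n l : ℤ, b (n, l) = a n l)
    (hmul : ∀ n₁ l₁ n₂ l₂ : ℤ,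
      a n₁ l₁ * a n₂ l₂ =
        Complex.exp (Complex.I * (lam * n₁ * l₂)) • a (n₁ + n₂) (l₁ + l₂))
    (α : ℝ) (p q : ℤ) (hpq : Int.gcd p q = 1)
    (u : A) (hu : u = Complex.exp (-(Complex.I * α)) • a p q)
    (I : Submodule Aᵐᵒᵖ A) (hI : I = Submodule.span Aᵐᵒᵖ ({u - 1} : Set A)) :
    (∀ j k : ℤ,
      (op u) • (Submodule.Quotient.mk (a j k) : A ⧸ I) =
        Submodule.Quotient.mk
          (Complex.exp (Complex.I * (lam * (j * q - k * p))) • a j k)) ∧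
    (∀ j k : ℤ,
      (Submodule.Quotient.mk (a (j + p) (k + q)) : A ⧸ I) =
        Submodule.Quotient.mk
          (Complex.exp (Complex.I * (α - lam * k * p)) • a j k)) ∧
    (∃ (c : ℤ → ℤ → ℂ) (ξ : Module.Basis ℤ ℂ (A ⧸ I)),
      ∀ j k : ℤ, ‖c j k‖ = 1 ∧
        ξ (j * q - k * p) =
          Submodule.Quotient.mk ((c j k) • a j k)) := by
  subst hI
  have hmk := Submodule.Quotient.mk_mul_eq_of_span_sub_one u
  refine ⟨fun j k => ?_, fun j k => ?_, ?_⟩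
  · rw [← Submodule.Quotient.mk_smul, op_smul_eq_mul, RotationAlgebra.mul_shift hmul hu,
      Submodule.Quotient.mk_smul, hmk, Submodule.Quotient.mk_smul]
  · rw [Submodule.Quotient.mk_smul, ← hmk (a j k), RotationAlgebra.shift_mul hmul hu,
      ← Submodule.Quotient.mk_smul, smul_smul, ← Complex.exp_add,
      show Complex.I * (α - lam * k * p) + Complex.I * (lam * k * p - α) = 0 by ring,
      Complex.exp_zero, one_smul]
  · obtain ⟨s, r, hsr⟩ := Int.isCoprime_iff_gcd_eq_one.mpr hpq
    have hxy : q * r - p * (-s) = 1 := by linear_combination hsr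
    refine ⟨fun j k =>
        Complex.exp (-(Complex.I * RotationAlgebra.phase lam α p q (-s) (bezoutEquiv hxy (j, k)))),
      (RotationAlgebra.twistedBasis b lam α hxy).quotientSpanSubOne u
        (RotationAlgebra.mul_twistedBasis hmul hu b hb hxy),
      fun j k => ⟨by simp [Complex.norm_exp], ?_⟩⟩
    rw [Module.Basis.quotientSpanSubOne_apply _ _ _ _ (k * r - j * (-s))]
    exact congrArg _ ((RotationAlgebra.twistedBasis_bezoutEquiv b hxy (j, k)).trans (by rw [hb]))
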